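/- For α > 1/2 and R > 0, the probability that two independent radial coordinates r_u, r_v each with density p(r) = α·sinh(α r)/(cosh(α R)−1) on [0,R] satisfy r_u + r_v < R is at most C·R·e^{−α R}·(cosh(α R)/(cosh(α R)−1))² · α for some absolute constant C; more precisely, ∫∫_{r_u+r_v<R} p(r_u)p(r_v) dr_u dr_v ≤ (α R sinh(α R)/2 + cosh(α R) − 1)/(cosh(α R) − 1)², and this bound is O(R e^{−α R}) as R → ∞. -/

import Mathlib

open Real intervalIntegral

/-!
Integrating out `r_v` leaves the convolution `∫₀ᴿ α sinh (α r) (cosh (α (R - r)) - 1) dr`, which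
evaluates exactly to `α R sinh (α R) / 2 - (cosh (α R) - 1)`; dividing by `(cosh (α R) - 1)²`
gives the probability in closed form, and it is below the stated bound. For the growth rate,
the numerator is at most `R (α / 4 + 1) e^{α R}`, while
`cosh x - 1 = eˣ (1 - e^{-x})² / 2 ≥ (1 - e^{-α})² eˣ / 2` for `x ≥ α`.
-/

theorem hasDerivAt_cosh_mul (α x : ℝ) :
    HasDerivAt (fun r => cosh (α * r)) (α * sinh (α * x)) x := by
  simpa [mul_comm] using ((hasDerivAt_id x).const_mul α).cosh

theorem integral_mul_sinh_mul (α b : ℝ) :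
    ∫ r in (0 : ℝ)..b, α * sinh (α * r) = cosh (α * b) - 1 := by
  rw [integral_eq_sub_of_hasDerivAt (fun x _ => hasDerivAt_cosh_mul α x)
    (Continuous.intervalIntegrable (by fun_prop) _ _)]
  simp

/-- The antiderivative comes from
`2 sinh a (cosh b - 1) = sinh (a + b) + sinh (a - b) - 2 sinh a` with `a + b = α R`. -/
theorem integral_mul_sinh_mul_cosh_sub_one (α R : ℝ) :
    ∫ r in (0 : ℝ)..R, α * sinh (α * r) * (cosh (α * (R - r)) - 1)
      = α * R * sinh (α * R) / 2 - (cosh (α * R) - 1) := by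
  have hderiv : ∀ x ∈ Set.uIcc (0 : ℝ) R,
      HasDerivAt (fun r => α * sinh (α * R) * r / 2 + cosh (α * (2 * r - R)) / 4 - cosh (α * r))
        (α * sinh (α * x) * (cosh (α * (R - x)) - 1)) x := by
    intro x _
    have hlin : HasDerivAt (fun r => α * (2 * r - R)) (2 * α) x := by
      simpa [mul_comm] using (((hasDerivAt_id x).const_mul 2).sub_const R).const_mul α
    refine ((((hasDerivAt_id x).const_mul (α * sinh (α * R))).div_const 2).add
      (hlin.cosh.div_const 4) |>.sub (hasDerivAt_cosh_mul α x)).congr_deriv ?_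
    have hR : α * R = α * x + α * (R - x) := by ring
    have h2x : α * (2 * x - R) = α * x - α * (R - x) := by ring
    rw [hR, sinh_add, h2x, sinh_sub]
    ring
  rw [integral_eq_sub_of_hasDerivAt hderiv (Continuous.intervalIntegrable (by fun_prop) _ _)]
  have h2R : α * (2 * R - R) = α * R := by ring
  have h0 : α * (2 * 0 - R) = -(α * R) := by ring
  rw [h2R, h0, cosh_neg]
  simp only [mul_zero, cosh_zero]
  ring

theorem integral_close_pair_eq (α R : ℝ) :
    (∫ ru in (0 : ℝ)..R, ∫ rv in (0 : ℝ)..(R - ru),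
        (α * sinh (α * ru) / (cosh (α * R) - 1)) * (α * sinh (α * rv) / (cosh (α * R) - 1)))
      = (α * R * sinh (α * R) / 2 - (cosh (α * R) - 1)) / (cosh (α * R) - 1) ^ 2 := by
  set c := cosh (α * R) - 1
  have hsplit : ∀ ru rv : ℝ, (α * sinh (α * ru) / c) * (α * sinh (α * rv) / c)
      = (α * sinh (α * ru) / c ^ 2) * (α * sinh (α * rv)) := fun _ _ => by
    rw [div_mul_div_comm, sq, mul_div_right_comm]
  have hinner : ∀ ru : ℝ, ∫ rv in (0 : ℝ)..(R - ru), α * sinh (α * ru) / c ^ 2 * (α * sinh (α * rv))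
      = α * sinh (α * ru) / c ^ 2 * (cosh (α * (R - ru)) - 1) := fun ru => by
    rw [intervalIntegral.integral_const_mul, integral_mul_sinh_mul]
  simp_rw [hsplit, hinner, div_mul_eq_mul_div]
  rw [intervalIntegral.integral_div, integral_mul_sinh_mul_cosh_sub_one]

theorem cosh_sub_one_eq_exp_mul (x : ℝ) : cosh x - 1 = exp x * (1 - exp (-x)) ^ 2 / 2 := by
  have : exp x * exp (-x) = 1 := by rw [← exp_add, add_neg_cancel, exp_zero]
  rw [cosh_eq]
  linear_combination (-(exp (-x)) / 2 + 1) * this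

theorem exp_mul_le_cosh_sub_one {a x : ℝ} (ha : 0 ≤ a) (hax : a ≤ x) :
    (1 - exp (-a)) ^ 2 / 2 * exp x ≤ cosh x - 1 := by
  rw [cosh_sub_one_eq_exp_mul, mul_comm, mul_div_assoc]
  gcongr
  simpa using exp_le_one_iff.mpr (neg_nonpos.mpr ha)

theorem mul_sinh_div_two_add_cosh_sub_one_le {x R : ℝ} (hx : 0 ≤ x) (hR : 1 ≤ R) :
    x * sinh x / 2 + cosh x - 1 ≤ (x / 4 + R) * exp x := by
  have hsinh : sinh x ≤ exp x / 2 := by rw [sinh_eq]; linarith [exp_pos (-x)]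
  have hcosh : cosh x ≤ exp x := by
    rw [cosh_eq]; linarith [exp_le_exp.mpr (show -x ≤ x by linarith)]
  nlinarith [exp_pos x]

theorem close_pair_bound_le_mul_exp {α R : ℝ} (hα : 0 < α) (hR : 1 ≤ R) :
    (α * R * sinh (α * R) / 2 + cosh (α * R) - 1) / (cosh (α * R) - 1) ^ 2
      ≤ (α / 4 + 1) / ((1 - exp (-α)) ^ 2 / 2) ^ 2 * R * exp (-α * R) := by
  set k := (1 - exp (-α)) ^ 2 / 2
  have hk : 0 < k := by
    have : exp (-α) < 1 := exp_lt_one_iff.mpr (neg_neg_of_pos hα)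
    positivity
  have hαR : α ≤ α * R := le_mul_of_one_le_right hα.le hR
  have hnum := mul_sinh_div_two_add_cosh_sub_one_le (hα.le.trans hαR) hR
  have hden := exp_mul_le_cosh_sub_one hα.le hαR
  calc (α * R * sinh (α * R) / 2 + cosh (α * R) - 1) / (cosh (α * R) - 1) ^ 2
      ≤ (α * R / 4 + R) * exp (α * R) / (k * exp (α * R)) ^ 2 := by gcongr
    _ = (α / 4 + 1) / k ^ 2 * R * exp (-α * R) := by
      rw [neg_mul, exp_neg]
      field_simp

/-- For `α > 1/2`, the probability that two independent radial
coordinates with density `p(r) = α·sinh(α r)/(cosh(α R) − 1)` on `[0,R]` satisfy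
`r_u + r_v < R` is at most `(α R sinh(α R)/2 + cosh(α R) − 1)/(cosh(α R) − 1)²`,
and this bound is `O(R e^{−α R})` as `R → ∞`. -/
theorem close_pair_probability_bound (α : ℝ) (hα : 1 / 2 < α) :
    (∀ R : ℝ, 0 < R →
      (∫ ru in (0 : ℝ)..R, ∫ rv in (0 : ℝ)..(R - ru),
          (α * Real.sinh (α * ru) / (Real.cosh (α * R) - 1)) *
            (α * Real.sinh (α * rv) / (Real.cosh (α * R) - 1)))
        ≤ (α * R * Real.sinh (α * R) / 2 + Real.cosh (α * R) - 1)
            / (Real.cosh (α * R) - 1) ^ 2) ∧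
    ∃ C : ℝ, 0 < C ∧ ∀ R : ℝ, 1 ≤ R →
      (α * R * Real.sinh (α * R) / 2 + Real.cosh (α * R) - 1)
          / (Real.cosh (α * R) - 1) ^ 2
        ≤ C * R * Real.exp (-α * R) := by
  have hα₀ : 0 < α := by linarith
  refine ⟨fun R _ => ?_, _, ?_, fun R hR => close_pair_bound_le_mul_exp hα₀ hR⟩
  · rw [integral_close_pair_eq]
    gcongr ?_ / _
    linarith [one_le_cosh (α * R)]
  · have : 0 < 1 - exp (-α) := sub_pos.mpr (exp_lt_one_iff.mpr (neg_neg_of_pos hα₀))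
    positivity
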